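/- Let G = (V, E, ε) be a loopless multigraph and D an orientation of G with in-degree function ρ_D. Then D is a decreasingly minimal orientation of G (i.e., ρ_D ≤_dec ρ_{D′} for every orientation D′ of G) if and only if there exist no vertices s, t ∈ V such that t is reachable from s in D and ρ_D(t) ≥ ρ_D(s) + 2. -/

import Mathlib

open Finset

/-- An orientation of a multigraph `(V, E, ε)`: each edge `e` gets a tail and a
head whose unordered pair is `ε e`. -/
structure GraphOrientation (V : Type*) (E : Type*) (ε : E → Sym2 V) where
  tail : E → V
  head : E → V
  compat : ∀ e : E, ε e = s(tail e, head e)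

/-- The in-degree (as an integer) of a vertex in an orientation. -/
def indeg {V E : Type*} [Fintype E] [DecidableEq V] {ε : E → Sym2 V}
    (D : GraphOrientation V E ε) (v : V) : ℤ :=
  ((Finset.univ.filter (fun e => D.head e = v)).card : ℤ)

/-- `Reach D s t`: `t` is reachable from `s` in the orientation `D`. -/
def Reach {V E : Type*} {ε : E → Sym2 V} (D : GraphOrientation V E ε) : V → V → Prop :=
  Relation.ReflTransGen (fun u v => ∃ e : E, D.tail e = u ∧ D.head e = v)

/-- `x↓`: the values of `x` arranged in nonincreasing order. -/
def sortedDesc {V : Type*} [Fintype V] (x : V → ℤ) : List ℤ :=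
  ((Finset.univ.val.map x).sort (· ≤ ·)).reverse

/-- `x ≤_dec y`: `x↓` is lexicographically less than or equal to `y↓`. -/
def DecLE {V : Type*} [Fintype V] (x y : V → ℤ) : Prop :=
  sortedDesc x = sortedDesc y ∨ List.Lex (· < ·) (sortedDesc x) (sortedDesc y)

/-!
Reversing a dipath from `s` to `t` raises `ρ(s)` and lowers `ρ(t)` by one, all other in-degrees
unchanged; when `ρ(t) ≥ ρ(s) + 2` this strictly decreases `ρ↓` lexicographically, which gives
necessity. Conversely, let `D'` be any orientation. The edges on which `D'` differs from `D` carry a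
net flow equal to `ρ_{D'} - ρ_D`, so a vertex `t` with `ρ_{D'}(t) < ρ_D(t)` is reached in `D`, along
such edges, from a vertex `s` with `ρ_{D'}(s) > ρ_D(s)`. Reversing that path in `D'` brings `D'`
closer to `D`, and since `ρ_D(t) ≤ ρ_D(s) + 1` it moves a unit from `s` to a vertex of no larger
in-degree, so `ρ_{D'}↓` does not increase. Induction on the number of differing edges concludes.
-/

theorem List.lex_lt_of_count_lt {α : Type*} [LinearOrder α] :
    ∀ {l₁ l₂ : List α} {v : α}, l₂.Pairwise (· ≥ ·) → l₁.count v < l₂.count v →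
      (∀ w, v < w → l₁.count w = l₂.count w) → List.Lex (· < ·) l₁ l₂
  | [], [], _, _, hv, _ => by simp at hv
  | [], _ :: _, _, _, _, _ => .nil
  | _ :: _, [], _, _, hv, _ => by simp at hv
  | a :: l₁, b :: l₂, v, hs, hv, habove => by
    rcases lt_trichotomy a b with hab | rfl | hba
    · exact .rel hab
    · refine .cons (lex_lt_of_count_lt hs.of_cons (v := v) ?_ fun w hw => ?_)
      · simpa [List.count_cons] using hv
      · simpa [List.count_cons] using habove w hw
    · have hle : ∀ z ∈ b :: l₂, z ≤ b := by
        simpa using (List.pairwise_cons.1 hs).1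
      have hvb : v ≤ b := hle v (List.count_pos_iff.1 (by omega))
      have ha : a ∉ b :: l₂ := fun h => (hle a h).not_gt hba
      have := habove a (hvb.trans_lt hba)
      rw [List.count_eq_zero_of_not_mem ha] at this
      simp at this

section DecreasingOrder

variable {V : Type*} [Fintype V]

lemma count_sortedDesc (x : V → ℤ) (w : ℤ) :
    (sortedDesc x).count w = #{a | x a = w} := by
  rw [sortedDesc, List.count_reverse, ← Multiset.coe_count, Multiset.sort_eq,
    Multiset.count_map, Finset.card_def, Finset.filter_val]
  simp only [eq_comm]

lemma pairwise_ge_sortedDesc (x : V → ℤ) : (sortedDesc x).Pairwise (· ≥ ·) := by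
  rw [sortedDesc, List.pairwise_reverse]
  exact Multiset.pairwise_sort _ _

lemma sortedDesc_eq_of_card_filter_eq {x y : V → ℤ}
    (h : ∀ w, #{a | x a = w} = #{a | y a = w}) : sortedDesc x = sortedDesc y := by
  unfold sortedDesc
  congr 2
  ext w
  simp only [Multiset.count_map, ← Finset.filter_val, ← Finset.card_def]
  simpa only [eq_comm] using h w

lemma decLE_trans {x y z : V → ℤ} (hxy : DecLE x y) (hyz : DecLE y z) : DecLE x z := by
  rcases hxy with hxy | hxy <;> rcases hyz with hyz | hyz
  · exact .inl (hxy.trans hyz)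
  · exact .inr (hxy ▸ hyz)
  · exact .inr (hyz ▸ hxy)
  · exact .inr (List.lex_trans (fun h₁ h₂ => h₁.trans h₂) hxy hyz)

lemma not_decLE_of_lex {x y : V → ℤ} (h : List.Lex (· < ·) (sortedDesc y) (sortedDesc x)) :
    ¬ DecLE x y := by
  rintro (hxy | hxy)
  · rw [hxy] at h
    exact asymm h h
  · exact asymm hxy h

variable [DecidableEq V] {x x' : V → ℤ} {p q : V}

lemma card_filter_of_transfer (hpq : p ≠ q)
    (hx' : ∀ v, x' v = x v + (if p = v then 1 else 0) - (if q = v then 1 else 0)) (w : ℤ) :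
    (#{a | x' a = w} : ℤ) = #{a | x a = w}
      + ((if x p + 1 = w then 1 else 0) - (if x p = w then 1 else 0))
      + ((if x q - 1 = w then 1 else 0) - (if x q = w then 1 else 0)) := by
  have hdiff : ∑ a, ((if x' a = w then (1 : ℤ) else 0) - (if x a = w then 1 else 0))
      = ((if x p + 1 = w then 1 else 0) - (if x p = w then 1 else 0))
        + ((if x q - 1 = w then 1 else 0) - (if x q = w then 1 else 0)) := by
    rw [Fintype.sum_eq_add p q hpq]
    · simp [hx', hpq, hpq.symm]
    · rintro a ⟨hap, haq⟩
      simp [hx', Ne.symm hap, Ne.symm haq]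
  simp only [Finset.card_filter, Nat.cast_sum, Nat.cast_ite, Nat.cast_one, Nat.cast_zero]
  rw [add_assoc, ← hdiff, Finset.sum_sub_distrib]
  ring

lemma lex_sortedDesc_of_transfer (hpq : p ≠ q)
    (hx' : ∀ v, x' v = x v + (if p = v then 1 else 0) - (if q = v then 1 else 0))
    (h : x p + 2 ≤ x q) : List.Lex (· < ·) (sortedDesc x') (sortedDesc x) := by
  -- `x q` is the largest value whose multiplicity changes, and it loses an occurrence
  refine List.lex_lt_of_count_lt (pairwise_ge_sortedDesc x) (v := x q) ?_ fun w hw => ?_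
  · have := card_filter_of_transfer hpq hx' (x q)
    rw [count_sortedDesc, count_sortedDesc]
    simp only [if_neg (show x p + 1 ≠ x q by omega), if_neg (show x p ≠ x q by omega),
      if_neg (show x q - 1 ≠ x q by omega), ↓reduceIte] at this
    omega
  · have := card_filter_of_transfer hpq hx' w
    rw [count_sortedDesc, count_sortedDesc]
    simp only [if_neg (show x p + 1 ≠ w by omega), if_neg (show x p ≠ w by omega),
      if_neg (show x q - 1 ≠ w by omega), if_neg (show x q ≠ w by omega)] at this
    omega

lemma decLE_of_transfer (hpq : p ≠ q)
    (hx' : ∀ v, x' v = x v + (if p = v then 1 else 0) - (if q = v then 1 else 0))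
    (h : x p < x q) : DecLE x' x := by
  rcases (Int.add_one_le_iff.2 h).eq_or_lt with hswap | hgap
  · refine .inl (sortedDesc_eq_of_card_filter_eq fun w => ?_)
    have := card_filter_of_transfer hpq hx' w
    rw [← hswap, add_sub_cancel_right] at this
    omega
  · exact .inr (lex_sortedDesc_of_transfer hpq hx' (by omega))

end DecreasingOrder

namespace GraphOrientation

variable {V E : Type*} {ε : E → Sym2 V}

def reverse [DecidableEq E] (D : GraphOrientation V E ε) (T : Finset E) :
    GraphOrientation V E ε where
  tail e := if e ∈ T then D.head e else D.tail e
  head e := if e ∈ T then D.tail e else D.head e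
  compat e := by split_ifs <;> simp [D.compat e, Sym2.eq_swap]

def netOut [DecidableEq V] (D : GraphOrientation V E ε) (T : Finset E) (v : V) : ℤ :=
  ∑ e ∈ T, ((if D.tail e = v then 1 else 0) - (if D.head e = v then 1 else 0))

lemma netOut_eq_neg_of_reversed [DecidableEq V] {D D' : GraphOrientation V E ε} {T : Finset E}
    (h : ∀ e ∈ T, D'.tail e = D.head e ∧ D'.head e = D.tail e) (v : V) :
    D'.netOut T v = -D.netOut T v := by
  rw [netOut, netOut, ← Finset.sum_neg_distrib]
  refine Finset.sum_congr rfl fun e he => ?_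
  rw [(h e he).1, (h e he).2]
  ring

lemma sum_netOut [Fintype V] [DecidableEq V] (D : GraphOrientation V E ε) (T : Finset E) :
    ∑ v, D.netOut T v = 0 := by
  simp only [netOut]
  rw [Finset.sum_comm]
  simp [Finset.sum_sub_distrib]

lemma sum_netOut_nonneg_of_closed [DecidableEq V] (D : GraphOrientation V E ε) {T : Finset E}
    {R : Finset V} (hR : ∀ e ∈ T, D.head e ∈ R → D.tail e ∈ R) :
    0 ≤ ∑ v ∈ R, D.netOut T v := by
  simp only [netOut]
  rw [Finset.sum_comm]
  refine Finset.sum_nonneg fun e he => ?_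
  have := hR e he
  simp only [Finset.sum_sub_distrib, Finset.sum_ite_eq]
  split_ifs <;> simp_all

lemma indeg_eq_sum [Fintype E] [DecidableEq V] (D : GraphOrientation V E ε) (v : V) :
    indeg D v = ∑ e, if D.head e = v then 1 else 0 := by
  simp only [indeg, Finset.card_filter, Nat.cast_sum, Nat.cast_ite, Nat.cast_one, Nat.cast_zero]

lemma indeg_reverse [Fintype E] [DecidableEq E] [DecidableEq V] (D : GraphOrientation V E ε)
    (T : Finset E) (v : V) : indeg (D.reverse T) v = indeg D v + D.netOut T v := by
  have hterm : ∀ e, (if (D.reverse T).head e = v then (1 : ℤ) else 0)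
      = (if D.head e = v then 1 else 0)
        + if e ∈ T then (if D.tail e = v then 1 else 0) - (if D.head e = v then 1 else 0)
          else 0 := by
    intro e
    by_cases he : e ∈ T <;> simp [reverse, he]
  rw [indeg_eq_sum, indeg_eq_sum, Finset.sum_congr rfl fun e _ => hterm e,
    Finset.sum_add_distrib, Finset.sum_ite_mem, Finset.univ_inter, netOut]

lemma reversed_of_head_ne {D D' : GraphOrientation V E ε} {e : E} (h : D'.head e ≠ D.head e) :
    D'.tail e = D.head e ∧ D'.head e = D.tail e := by
  have hcomp := (D.compat e).symm.trans (D'.compat e)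
  rw [Sym2.eq_iff] at hcomp
  rcases hcomp with ⟨-, h'⟩ | ⟨h₁, h₂⟩
  · exact absurd h'.symm h
  · exact ⟨h₂.symm, h₁.symm⟩

section Disagreement

variable [Fintype E] [DecidableEq V]

def disagree (D D' : GraphOrientation V E ε) : Finset E := {e | D'.head e ≠ D.head e}

lemma indeg_eq_add_netOut_disagree (D D' : GraphOrientation V E ε) (v : V) :
    indeg D' v = indeg D v + D.netOut (D.disagree D') v := by
  classical
  rw [← indeg_reverse]
  have hhead : (D.reverse (D.disagree D')).head = D'.head := by
    funext e
    simp only [reverse, disagree, Finset.mem_filter, Finset.mem_univ, true_and]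
    split_ifs with he
    · exact (reversed_of_head_ne he).2.symm
    · exact (not_not.1 he).symm
  simp only [indeg, hhead]

end Disagreement

section Walk

variable {D : GraphOrientation V E ε}

inductive IsWalk (D : GraphOrientation V E ε) : V → V → List E → Prop
  | nil (v : V) : IsWalk D v v []
  | cons {e : E} {t : V} {L : List E} : IsWalk D (D.head e) t L → IsWalk D (D.tail e) t (e :: L)

lemma IsWalk.exists_of_append {s t : V} {A B : List E} (h : D.IsWalk s t (A ++ B)) :
    ∃ u, D.IsWalk u t B := by
  induction A generalizing s with
  | nil => exact ⟨s, h⟩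
  | cons e A ih =>
    cases h with
    | cons h => exact ih h

lemma IsWalk.exists_nodup {s t : V} {L : List E} (h : D.IsWalk s t L) :
    ∃ L' : List E, L'.Nodup ∧ D.IsWalk s t L' ∧ L' ⊆ L := by
  induction h with
  | nil v => exact ⟨[], List.nodup_nil, .nil v, List.nil_subset _⟩
  | @cons e t L _ ih =>
    obtain ⟨L', hnd, hw, hsub⟩ := ih
    by_cases he : e ∈ L'
    · -- cut off the closed walk that returns to `e`
      obtain ⟨A, C, rfl⟩ := List.append_of_mem he
      obtain ⟨u, hu⟩ := hw.exists_of_append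
      cases hu with
      | cons hC =>
        refine ⟨e :: C, hnd.sublist (List.sublist_append_right A _), .cons hC, ?_⟩
        exact List.cons_subset_cons e fun f hf => hsub (List.mem_append_right A (.tail e hf))
    · exact ⟨e :: L', hnd.cons he, .cons hw, List.cons_subset_cons e hsub⟩

lemma IsWalk.sum_map_eq [DecidableEq V] {s t : V} {L : List E} (h : D.IsWalk s t L) (v : V) :
    (L.map fun e => (if D.tail e = v then (1 : ℤ) else 0) - (if D.head e = v then 1 else 0)).sum
      = (if s = v then 1 else 0) - (if t = v then 1 else 0) := by
  induction h with
  | nil => simp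
  | cons _ ih =>
    rw [List.map_cons, List.sum_cons, ih]
    ring

lemma exists_isWalk_of_reflTransGen {r : V → V → Prop} {S : Finset E}
    (hr : ∀ u v, r u v → ∃ e ∈ S, D.tail e = u ∧ D.head e = v) {s t : V}
    (h : Relation.ReflTransGen r s t) : ∃ L : List E, D.IsWalk s t L ∧ ∀ e ∈ L, e ∈ S := by
  induction h using Relation.ReflTransGen.head_induction_on with
  | refl => exact ⟨[], .nil t, by simp⟩
  | head hab _ ih =>
    obtain ⟨e, heS, rfl, rfl⟩ := hr _ _ hab
    obtain ⟨L, hL, hLS⟩ := ih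
    exact ⟨e :: L, .cons hL, by simpa [heS] using hLS⟩

lemma exists_netOut_eq_of_reflTransGen [DecidableEq V] {r : V → V → Prop}
    {S : Finset E} (hr : ∀ u v, r u v → ∃ e ∈ S, D.tail e = u ∧ D.head e = v) {s t : V}
    (h : Relation.ReflTransGen r s t) :
    ∃ T ⊆ S, ∀ v, D.netOut T v = (if s = v then 1 else 0) - (if t = v then 1 else 0) := by
  classical
  obtain ⟨L₀, hw₀, hS⟩ := exists_isWalk_of_reflTransGen hr h
  obtain ⟨L, hnd, hw, hsub⟩ := hw₀.exists_nodup
  refine ⟨L.toFinset, fun e he => hS e (hsub (List.mem_toFinset.1 he)), fun v => ?_⟩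
  rw [netOut, List.sum_toFinset _ hnd, hw.sum_map_eq]

end Walk

/-- The vertices reaching `t` along `T` form a set that no edge of `T` leaves backwards, so
their total `netOut` is nonnegative: the deficit at `t` is balanced by a surplus upstream. -/
lemma exists_reflTransGen_of_netOut_neg [Fintype V] [DecidableEq V] (D : GraphOrientation V E ε)
    (T : Finset E) {t : V} (ht : D.netOut T t < 0) :
    ∃ s, 0 < D.netOut T s ∧
      Relation.ReflTransGen (fun u v => ∃ e ∈ T, D.tail e = u ∧ D.head e = v) s t := by
  classical
  set r := fun u v => ∃ e ∈ T, D.tail e = u ∧ D.head e = v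
  set R : Finset V := {u | Relation.ReflTransGen r u t}
  have hR : 0 ≤ ∑ v ∈ R, D.netOut T v :=
    D.sum_netOut_nonneg_of_closed fun e he hhead => by
      simp only [R, Finset.mem_filter, Finset.mem_univ, true_and] at hhead ⊢
      exact .head ⟨e, he, rfl, rfl⟩ hhead
  by_contra! hno
  have hle : ∀ v ∈ R, D.netOut T v ≤ 0 :=
    fun v hv => not_lt.1 fun hpos => hno v hpos (Finset.mem_filter.1 hv).2
  have htR : t ∈ R := Finset.mem_filter.2 ⟨Finset.mem_univ t, .refl⟩
  linarith [Finset.sum_neg' hle ⟨t, htR, ht⟩]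

section DecreasinglyMinimal

variable [Fintype V] [Fintype E] [DecidableEq V] {D : GraphOrientation V E ε}

lemma exists_not_decLE_of_reach {s t : V} (hst : Reach D s t) (h : indeg D s + 2 ≤ indeg D t) :
    ∃ D' : GraphOrientation V E ε, ¬ DecLE (indeg D) (indeg D') := by
  classical
  obtain ⟨T, -, hT⟩ := D.exists_netOut_eq_of_reflTransGen (S := Finset.univ)
    (fun _ _ ⟨e, hu, hv⟩ => ⟨e, Finset.mem_univ e, hu, hv⟩) hst
  refine ⟨D.reverse T, not_decLE_of_lex (lex_sortedDesc_of_transfer ?_ (fun v => ?_) h)⟩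
  · rintro rfl
    omega
  · rw [indeg_reverse, hT]
    ring

lemma exists_decLE_of_indeg_ne (hD : ∀ s t, Reach D s t → indeg D t ≤ indeg D s + 1)
    {D' : GraphOrientation V E ε} (hne : indeg D' ≠ indeg D) :
    ∃ D'' : GraphOrientation V E ε,
      #(D.disagree D'') < #(D.disagree D') ∧ DecLE (indeg D'') (indeg D') := by
  classical
  set Δ := D.disagree D'
  have hD' : ∀ v, indeg D' v = indeg D v + D.netOut Δ v := indeg_eq_add_netOut_disagree D D'
  obtain ⟨t, ht⟩ : ∃ t, D.netOut Δ t < 0 := by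
    by_contra! hnn
    have hzero := (Finset.sum_eq_zero_iff_of_nonneg fun v _ => hnn v).1 (D.sum_netOut Δ)
    exact hne (funext fun v => by rw [hD', hzero v (Finset.mem_univ v), add_zero])
  obtain ⟨s, hs, hst⟩ := D.exists_reflTransGen_of_netOut_neg Δ ht
  obtain ⟨T, hTΔ, hT⟩ := D.exists_netOut_eq_of_reflTransGen (fun _ _ h => h) hst
  have hts : t ≠ s := by
    rintro rfl
    omega
  have hTne : T.Nonempty := by
    rw [Finset.nonempty_iff_ne_empty]
    rintro rfl
    simpa [netOut, hts] using hT s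
  have hrev : ∀ e ∈ T, D'.tail e = D.head e ∧ D'.head e = D.tail e :=
    fun e he => reversed_of_head_ne (Finset.mem_filter.1 (hTΔ he)).2
  have hdisagree : D.disagree (D'.reverse T) = Δ \ T := by
    ext e
    simp only [Δ, disagree, Finset.mem_sdiff, Finset.mem_filter, Finset.mem_univ, true_and]
    by_cases he : e ∈ T
    · simp [reverse, he, (hrev e he).1]
    · simp [reverse, he]
  refine ⟨D'.reverse T, ?_, decLE_of_transfer hts (fun v => ?_) ?_⟩
  · rw [hdisagree]
    exact Finset.card_lt_card (Finset.sdiff_ssubset hTΔ hTne)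
  · rw [indeg_reverse, netOut_eq_neg_of_reversed hrev, hT]
    ring
  · have := hD s t (Relation.ReflTransGen.mono (fun _ _ ⟨e, _, hu, hv⟩ => ⟨e, hu, hv⟩) _ _ hst)
    rw [hD', hD']
    omega

theorem decLE_indeg_of_forall_reach (hD : ∀ s t, Reach D s t → indeg D t ≤ indeg D s + 1)
    (D' : GraphOrientation V E ε) : DecLE (indeg D) (indeg D') := by
  by_cases hne : indeg D' = indeg D
  · exact .inl (by rw [hne])
  · obtain ⟨D'', hlt, hle⟩ := exists_decLE_of_indeg_ne hD hne
    exact decLE_trans (decLE_indeg_of_forall_reach hD D'') hle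
termination_by #(D.disagree D')

end DecreasinglyMinimal

end GraphOrientation

open GraphOrientation in
theorem stmt18_general {V E : Type*} [Fintype V] [Fintype E] [DecidableEq V]
    (ε : E → Sym2 V)
    (D : GraphOrientation V E ε) :
    (∀ D' : GraphOrientation V E ε, DecLE (indeg D) (indeg D')) ↔
      ¬ ∃ s t : V, Reach D s t ∧ indeg D s + 2 ≤ indeg D t := by
  constructor
  · rintro hmin ⟨s, t, hst, h⟩
    obtain ⟨D', hD'⟩ := exists_not_decLE_of_reach hst h
    exact hD' (hmin D')
  · intro hno
    refine decLE_indeg_of_forall_reach fun s t hst => ?_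
    by_contra! h
    exact hno ⟨s, t, hst, by omega⟩

/-- Theorem of Borradaile et al.: an orientation of a loopless multigraph is
decreasingly minimal iff there is no dipath from a node `s` to a node `t` with
`ρ(t) ≥ ρ(s) + 2`. -/
theorem stmt18 {V E : Type*} [Fintype V] [Fintype E] [DecidableEq V]
    (ε : E → Sym2 V) (hloopless : ∀ e : E, ¬ (ε e).IsDiag)
    (D : GraphOrientation V E ε) :
    (∀ D' : GraphOrientation V E ε, DecLE (indeg D) (indeg D')) ↔
      ¬ ∃ s t : V, Reach D s t ∧ indeg D s + 2 ≤ indeg D t :=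
  stmt18_general ε D
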